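/- For every z ∈ ℂ with |z| = 1, every θ ∈ {+1,−1}, and every ψ ∈ ℂ⁴, the bilinear Dirac form of the charge-conjugation projection vanishes: (P^z_θψ)†·γ⁰·(P^z_θψ) = 0, where ψ† = (ψ*)ᵀ is the conjugate transpose. -/

import Mathlib

open Matrix Complex

noncomputable section

/-- The Dirac gamma matrix `γ⁰ = [[I₂,0],[0,−I₂]]`. -/
def gamma0 : Matrix (Fin 4) (Fin 4) ℂ :=
  !![1, 0, 0, 0; 0, 1, 0, 0; 0, 0, -1, 0; 0, 0, 0, -1]

/-- `γ² = [[0,σ²],[−σ²,0]]` with `σ² = [[0,−i],[i,0]]`. -/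
def gamma2 : Matrix (Fin 4) (Fin 4) ℂ :=
  !![0, 0, 0, -I; 0, 0, I, 0; 0, I, 0, 0; -I, 0, 0, 0]

/-- Entrywise complex conjugation `ψ*` of a vector `ψ ∈ ℂ⁴`. -/
def vstar (ψ : Fin 4 → ℂ) : Fin 4 → ℂ := fun i => starRingEnd ℂ (ψ i)

/-- The charge conjugation operator `C^z_θ ψ = θ·z·γ²ψ*`. -/
def CC (z : ℂ) (θ : ℝ) (ψ : Fin 4 → ℂ) : Fin 4 → ℂ :=
  ((θ : ℂ) * z) • gamma2.mulVec (vstar ψ)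

/-- The projection `P^z_θ ψ = ½(ψ + C^z_θ ψ)`. -/
def PP (z : ℂ) (θ : ℝ) (ψ : Fin 4 → ℂ) : Fin 4 → ℂ :=
  (1 / 2 : ℂ) • (ψ + CC z θ ψ)

/-!
Since `|θ z| = 1` and `γ² (γ²)* = 1`, the charge conjugation `C` is an antilinear involution, so
`P ψ = ½ (ψ + C ψ)` is a fixed point of `C`. Reading `C φ = φ` off componentwise gives
`|φ₀| = |φ₃|` and `|φ₁| = |φ₂|`, so the form `|φ₀|² + |φ₁|² - |φ₂|² - |φ₃|²` vanishes at `φ = P ψ`.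
-/

lemma vstar_add (φ ψ : Fin 4 → ℂ) : vstar (φ + ψ) = vstar φ + vstar ψ := by
  ext i; simp [vstar]

lemma vstar_smul (a : ℂ) (ψ : Fin 4 → ℂ) : vstar (a • ψ) = starRingEnd ℂ a • vstar ψ := by
  ext i; simp [vstar]

lemma vstar_vstar (ψ : Fin 4 → ℂ) : vstar (vstar ψ) = ψ := by
  ext i; simp [vstar]

lemma vstar_gamma2_mulVec (ψ : Fin 4 → ℂ) : vstar (gamma2 *ᵥ ψ) = -(gamma2 *ᵥ vstar ψ) := by
  ext i; fin_cases i <;> simp [vstar, gamma2, mulVec, dotProduct, Fin.sum_univ_four]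

lemma gamma2_mul_self : gamma2 * gamma2 = -1 := by
  ext i j; fin_cases i <;> fin_cases j <;> simp [gamma2, Matrix.mul_apply, Fin.sum_univ_four]

lemma CC_add (z : ℂ) (θ : ℝ) (φ ψ : Fin 4 → ℂ) : CC z θ (φ + ψ) = CC z θ φ + CC z θ ψ := by
  simp only [CC, vstar_add, mulVec_add, smul_add]

lemma CC_smul (z : ℂ) (θ : ℝ) (a : ℂ) (ψ : Fin 4 → ℂ) :
    CC z θ (a • ψ) = starRingEnd ℂ a • CC z θ ψ := by
  simp only [CC, vstar_smul, mulVec_smul, smul_comm (starRingEnd ℂ a)]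

lemma CC_CC {z : ℂ} {θ : ℝ} (hc : ‖(θ : ℂ) * z‖ = 1) (ψ : Fin 4 → ℂ) :
    CC z θ (CC z θ ψ) = ψ := by
  have hcc : (θ * z : ℂ) * starRingEnd ℂ (θ * z) = 1 := by
    rw [mul_conj, normSq_eq_norm_sq, hc]; norm_num
  simp only [CC, vstar_smul, vstar_gamma2_mulVec, vstar_vstar, mulVec_smul, mulVec_neg,
    mulVec_mulVec, gamma2_mul_self, neg_mulVec, one_mulVec, neg_neg, smul_smul, hcc, one_smul]

lemma CC_PP {z : ℂ} {θ : ℝ} (hc : ‖(θ : ℂ) * z‖ = 1) (ψ : Fin 4 → ℂ) :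
    CC z θ (PP z θ ψ) = PP z θ ψ := by
  rw [PP, CC_smul, CC_add, CC_CC hc, add_comm, map_div₀, map_one, map_ofNat]

lemma vstar_dotProduct_gamma0_mulVec (φ : Fin 4 → ℂ) :
    vstar φ ⬝ᵥ gamma0 *ᵥ φ = ‖φ 0‖ ^ 2 + ‖φ 1‖ ^ 2 - ‖φ 2‖ ^ 2 - ‖φ 3‖ ^ 2 := by
  simp [vstar, gamma0, mulVec, dotProduct, Fin.sum_univ_four, conj_mul', sub_eq_add_neg, add_assoc]

lemma CC_apply_zero (z : ℂ) (θ : ℝ) (φ : Fin 4 → ℂ) :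
    CC z θ φ 0 = -((θ : ℂ) * z * (I * starRingEnd ℂ (φ 3))) := by
  simp [CC, gamma2, vstar, dotProduct, Fin.sum_univ_four]

lemma CC_apply_one (z : ℂ) (θ : ℝ) (φ : Fin 4 → ℂ) :
    CC z θ φ 1 = (θ : ℂ) * z * (I * starRingEnd ℂ (φ 2)) := by
  simp [CC, gamma2, vstar, dotProduct, Fin.sum_univ_four]

lemma norm_eq_of_CC_eq {z : ℂ} {θ : ℝ} (hc : ‖(θ : ℂ) * z‖ = 1) {φ : Fin 4 → ℂ}
    (hφ : CC z θ φ = φ) : ‖φ 0‖ = ‖φ 3‖ ∧ ‖φ 1‖ = ‖φ 2‖ := by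
  constructor
  · rw [← congrFun hφ 0, CC_apply_zero, norm_neg, norm_mul, hc]; simp
  · rw [← congrFun hφ 1, CC_apply_one, norm_mul, hc]; simp

lemma vstar_dotProduct_gamma0_mulVec_eq_zero_of_CC_eq {z : ℂ} {θ : ℝ}
    (hc : ‖(θ : ℂ) * z‖ = 1) {φ : Fin 4 → ℂ} (hφ : CC z θ φ = φ) : vstar φ ⬝ᵥ gamma0 *ᵥ φ = 0 := by
  obtain ⟨h03, h12⟩ := norm_eq_of_CC_eq hc hφ
  rw [vstar_dotProduct_gamma0_mulVec, h03, h12]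
  ring

/-- For `|z| = 1`, `θ ∈ {+1,−1}`, `ψ ∈ ℂ⁴`: `(P^z_θψ)†·γ⁰·(P^z_θψ) = 0`. -/
theorem proj_bilinear_form_vanishes (z : ℂ) (hz : ‖z‖ = 1)
    (θ : ℝ) (hθ : θ = 1 ∨ θ = -1) (ψ : Fin 4 → ℂ) :
    vstar (PP z θ ψ) ⬝ᵥ gamma0.mulVec (PP z θ ψ) = 0 := by
  have hc : ‖(θ : ℂ) * z‖ = 1 := by rcases hθ with rfl | rfl <;> simp [hz]
  exact vstar_dotProduct_gamma0_mulVec_eq_zero_of_CC_eq hc (CC_PP hc ψ)
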